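/- arXiv:2601.09245 — 4 statements merged into one kernel-verified Lean document; each statement's English description precedes it below -/
import Mathlib

section
/- For N > 0 and n \ge 0, the isotropic function S^n(N,N,N) (with polynomial weights x,y,z) satisfies the four-term relation: n \cdot S^n(N,N,N) = N \cdot ( S^n(N+1,N,N) + S^n(N,N+1,N) + S^n(N,N,N+1) - 3 S^n(N,N,N) ). -/
/-- The binomial coefficient `C(k+N-1, N-1)`, with the convention (from the binomial
series) that for `N = 0` it is the indicator of `k = 0`. -/
def Scoef (N k : ℕ) : ℕ := (k + N - 1).choose k

/-- `S^n(N_x,N_y,N_z) = ∑_{n_x+n_y+n_z=n} C(n_x+N_x-1,N_x-1) C(n_y+N_y-1,N_y-1)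
C(n_z+N_z-1,N_z-1) x^{n_x} y^{n_y} z^{n_z}`. -/
def Spoly {R : Type*} [CommRing R] (x y z : R) (n Nx Ny Nz : ℕ) : R :=
  ∑ a ∈ Finset.range (n + 1), ∑ b ∈ Finset.range (n + 1 - a),
    (Scoef Nx a : R) * (Scoef Ny b : R) * (Scoef Nz (n - a - b) : R)
      * x ^ a * y ^ b * z ^ (n - a - b)

/-
The monomial `x^a y^b z^c` of `S^n(N_x,N_y,N_z)` has coefficient `C(a+N_x-1,a) C(b+N_y-1,b) C(c+N_z-1,c)`,
and `N_x C(a+N_x,a) = (N_x + a) C(a+N_x-1,a)`. Hence `N_x (S^n(N_x+1,N_y,N_z) - S^n(N_x,N_y,N_z))`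
weights each monomial by its `x`-degree `a`, and the sum of the three such differences weights it by its
total degree `a + b + c = n`: an Euler relation, of which the theorem is the isotropic case.
-/
lemma Scoef_succ_mul (N k : ℕ) : N * Scoef (N + 1) k = (N + k) * Scoef N k := by
  rcases N with _ | M
  · rcases k with _ | k <;> simp [Scoef]
  · have h := Nat.choose_mul_succ_eq (k + M) k
    rw [show k + M + 1 - k = M + 1 by omega] at h
    rw [Scoef, Scoef, show k + (M + 1 + 1) - 1 = k + M + 1 by omega,
      show k + (M + 1) - 1 = k + M by omega]
    linarith

lemma Spoly_euler {R : Type*} [CommRing R] (x y z : R) (n Nx Ny Nz : ℕ) :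
    (n : R) * Spoly x y z n Nx Ny Nz =
      (Nx : R) * (Spoly x y z n (Nx + 1) Ny Nz - Spoly x y z n Nx Ny Nz) +
        (Ny : R) * (Spoly x y z n Nx (Ny + 1) Nz - Spoly x y z n Nx Ny Nz) +
        (Nz : R) * (Spoly x y z n Nx Ny (Nz + 1) - Spoly x y z n Nx Ny Nz) := by
  have key (N k : ℕ) : (N : R) * Scoef (N + 1) k = ((N : R) + k) * Scoef N k := by
    simpa using congrArg (Nat.cast : ℕ → R) (Scoef_succ_mul N k)
  simp only [Spoly, Finset.mul_sum, ← Finset.sum_sub_distrib, ← Finset.sum_add_distrib]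
  refine Finset.sum_congr rfl fun a ha => Finset.sum_congr rfl fun b hb => ?_
  simp only [Finset.mem_range] at ha hb
  set c := n - a - b
  rw [show n = a + b + c by omega]
  push_cast
  linear_combination
    -(Scoef Ny b * Scoef Nz c * x ^ a * y ^ b * z ^ c : R) * key Nx a -
      (Scoef Nx a * Scoef Nz c * x ^ a * y ^ b * z ^ c : R) * key Ny b -
      (Scoef Nx a * Scoef Ny b * x ^ a * y ^ b * z ^ c : R) * key Nz c

theorem stmt4_general {R : Type*} [CommRing R] (x y z : R) (n N : ℕ) :
    (n : R) * Spoly x y z n N N N =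
      (N : R) * (Spoly x y z n (N + 1) N N + Spoly x y z n N (N + 1) N +
        Spoly x y z n N N (N + 1) - 3 * Spoly x y z n N N N) := by
  rw [Spoly_euler]
  ring

/-- Four-term relation for the isotropic case: for `N > 0`,
`n S^n(N,N,N) = N (S^n(N+1,N,N) + S^n(N,N+1,N) + S^n(N,N,N+1) - 3 S^n(N,N,N))`. -/
theorem stmt4 {R : Type*} [CommRing R] (x y z : R) (n N : ℕ) (hN : 0 < N) :
    (n : R) * Spoly x y z n N N N =
      (N : R) * (Spoly x y z n (N + 1) N N + Spoly x y z n N (N + 1) N +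
        Spoly x y z n N N (N + 1) - 3 * Spoly x y z n N N N) :=
  stmt4_general x y z n N
end

section
/- The generalized Catalan numbers R^{n,m} := (m/(4n+m)) C(4n+m, n) (for 4n+m > 0, with R^{0,0} := 1) satisfy the recurrence R^{n,m} = R^{n,m-1} + R^{n-1,m+3} for all n \ge 1 and m \ge 1. -/
/-! Since `C(N-1, n-1) = (n/N) C(N, n)`, for `n ≥ 1` one has
`R^{n,m} = C(4n+m, n) - 4 C(4n+m-1, n-1)`, a fixed linear combination of binomial coefficients.
The recurrence is then Pascal's rule applied to both of them. -/

/-- The generalized Catalan numbers `R^{n,m} = (m/(4n+m)) C(4n+m,n)` for `4n+m > 0`,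
with `R^{0,0} := 1`. -/
def Rnm (n m : ℕ) : ℚ :=
  if n = 0 ∧ m = 0 then 1
  else (m : ℚ) / (4 * n + m) * (Nat.choose (4 * n + m) n : ℚ)

theorem Nat.cast_choose_succ_sub_mul_cast_choose (N k : ℕ) (p : ℚ) :
    ((N + 1).choose (k + 1) : ℚ) - p * N.choose k =
      ((N + 1 : ℚ) - p * (k + 1)) / (N + 1) * (N + 1).choose (k + 1) := by
  have absorb : ((N + 1 : ℕ) : ℚ) * N.choose k = (N + 1).choose (k + 1) * (k + 1 : ℕ) := by
    exact_mod_cast Nat.add_one_mul_choose_eq N k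
  push_cast at absorb
  field_simp
  linear_combination (-p) * absorb

theorem Rnm_zero_left (m : ℕ) : Rnm 0 m = 1 := by
  rcases Nat.eq_zero_or_pos m with rfl | hm
  · simp [Rnm]
  · simp [Rnm, hm.ne']

theorem Rnm_succ_left (n m : ℕ) :
    Rnm (n + 1) m = (4 * n + m + 4).choose (n + 1) - 4 * (4 * n + m + 3).choose n := by
  rw [Rnm, if_neg (by simp), show 4 * (n + 1) + m = 4 * n + m + 3 + 1 by ring,
    show 4 * n + m + 4 = 4 * n + m + 3 + 1 by ring, Nat.cast_choose_succ_sub_mul_cast_choose]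
  push_cast
  ring

/-- Recurrence `R^{n,m} = R^{n,m-1} + R^{n-1,m+3}` for `n ≥ 1`, `m ≥ 1`. -/
theorem stmt10 (n m : ℕ) (hn : 1 ≤ n) (hm : 1 ≤ m) :
    Rnm n m = Rnm n (m - 1) + Rnm (n - 1) (m + 3) := by
  obtain ⟨k, rfl⟩ := Nat.exists_eq_add_of_le' hn
  obtain ⟨j, rfl⟩ := Nat.exists_eq_add_of_le' hm
  rw [Nat.add_sub_cancel, Nat.add_sub_cancel]
  rcases k with _ | i
  · simp only [Rnm_succ_left, Rnm_zero_left]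
    simp
  · set N := 4 * i + j + 7
    rw [Rnm_succ_left, Rnm_succ_left, Rnm_succ_left,
      show 4 * (i + 1) + (j + 1) + 4 = N + 2 by omega,
      show 4 * (i + 1) + (j + 1) + 3 = N + 1 by omega,
      show 4 * (i + 1) + j + 4 = N + 1 by omega, show 4 * (i + 1) + j + 3 = N by omega,
      show 4 * i + (j + 1 + 3) + 4 = N + 1 by omega, show 4 * i + (j + 1 + 3) + 3 = N by omega,
      Nat.choose_succ_succ (N + 1) (i + 1), Nat.choose_succ_succ N i]
    push_cast
    ring
end

section
/- Define formal power series f_X(s) = \sum_{n\ge 0} R^n(1,0,0) s^{2n}, f_Y(s) = \sum_{n\ge 0} R^n(0,1,0) s^{2n}, f_Z(s) = \sum_{n\ge 0} R^n(0,0,1) s^{2n}, and \omega(s) = \sum_{n\ge 0} R^n(1,1,1) s^{2n+2}, where the coefficients R^n are evaluated with x = J_X^2, y = J_Y^2, z = J_Z^2. Then f_\alpha(s) \cdot (1 - \omega(s) J_\alpha^2) = 1 for each \alpha \in \{X,Y,Z\}. -/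
/-- `R^n(N_x,N_y,N_z)` evaluated at `x, y, z`. -/
def Rpoly {R : Type*} [CommRing R] (x y z : R) (n Nx Ny Nz : ℕ) : R :=
  4 * Spoly x y z n (Nx + n) (Ny + n) (Nz + n)
    - Spoly x y z n (Nx + n + 1) (Ny + n) (Nz + n)
    - Spoly x y z n (Nx + n) (Ny + n + 1) (Nz + n)
    - Spoly x y z n (Nx + n) (Ny + n) (Nz + n + 1)

/-- `f_X(s) = ∑_{n≥0} R^n(1,0,0) s^{2n}` with `x = J_X^2`, `y = J_Y^2`, `z = J_Z^2`. -/
def fX {R : Type*} [CommRing R] (JX JY JZ : R) : PowerSeries R :=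
  PowerSeries.mk fun k =>
    if k % 2 = 0 then Rpoly (JX ^ 2) (JY ^ 2) (JZ ^ 2) (k / 2) 1 0 0 else 0

/-- `f_Y(s) = ∑_{n≥0} R^n(0,1,0) s^{2n}`. -/
def fY {R : Type*} [CommRing R] (JX JY JZ : R) : PowerSeries R :=
  PowerSeries.mk fun k =>
    if k % 2 = 0 then Rpoly (JX ^ 2) (JY ^ 2) (JZ ^ 2) (k / 2) 0 1 0 else 0

/-- `f_Z(s) = ∑_{n≥0} R^n(0,0,1) s^{2n}`. -/
def fZ {R : Type*} [CommRing R] (JX JY JZ : R) : PowerSeries R :=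
  PowerSeries.mk fun k =>
    if k % 2 = 0 then Rpoly (JX ^ 2) (JY ^ 2) (JZ ^ 2) (k / 2) 0 0 1 else 0

/-- `ω(s) = ∑_{n≥0} R^n(1,1,1) s^{2n+2}`. -/
def omegaPS {R : Type*} [CommRing R] (JX JY JZ : R) : PowerSeries R :=
  PowerSeries.mk fun k =>
    if 2 ≤ k ∧ k % 2 = 0 then Rpoly (JX ^ 2) (JY ^ 2) (JZ ^ 2) ((k - 2) / 2) 1 1 1 else 0

namespace PowerSeries

variable {A : Type*} [CommRing A]

theorem derivative_X_mul (P : A⟦X⟧) : d⁄dX A (X * P) = P + X * d⁄dX A P := by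
  rw [Derivation.leibniz, derivative_X, smul_eq_mul, smul_eq_mul, mul_one, add_comm]

theorem map_derivative {B : Type*} [CommRing B] (φ : A →+* B) (f : A⟦X⟧) :
    map φ (d⁄dX A f) = d⁄dX B (map φ f) := by
  ext n
  simp [coeff_derivative]

theorem coeff_mul_eq_sum_range (F G : A⟦X⟧) (n : ℕ) :
    coeff n (F * G) = ∑ a ∈ Finset.range (n + 1), coeff a F * coeff (n - a) G := by
  rw [coeff_mul, Finset.Nat.sum_antidiagonal_eq_sum_range_succ_mk]

theorem derivative_pow_succ_of_mul_eq_one {P Q : A⟦X⟧} (hPQ : P * Q = 1) (m : ℕ) :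
    d⁄dX A (Q ^ (m + 1)) = -((m + 1) • (d⁄dX A P * Q ^ (m + 2))) := by
  have hD := congrArg (d⁄dX A) hPQ
  rw [Derivation.leibniz, Derivation.map_one_eq_zero, smul_eq_mul, smul_eq_mul] at hD
  have hQ : d⁄dX A Q = -(Q ^ 2 * d⁄dX A P) := by
    linear_combination Q * hD - d⁄dX A Q * hPQ
  rw [derivative_pow, hQ, nsmul_eq_mul]
  push_cast
  ring

/-- This is the residue of `g' / g ^ (m + 2) = -(g ^ (-(m + 1)))' / (m + 1)`, `g = X * P`. -/
theorem coeff_succ_derivative_X_mul_mul_pow [IsAddTorsionFree A] {P Q : A⟦X⟧}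
    (hPQ : P * Q = 1) (m : ℕ) : coeff (m + 1) (d⁄dX A (X * P) * Q ^ (m + 2)) = 0 := by
  have hsplit :
      d⁄dX A (X * P) * Q ^ (m + 2) = Q ^ (m + 1) + X * (d⁄dX A P * Q ^ (m + 2)) := by
    rw [derivative_X_mul]
    linear_combination Q ^ (m + 1) * hPQ
  have hcoeff := congrArg (coeff m) (derivative_pow_succ_of_mul_eq_one hPQ m)
  rw [coeff_derivative, map_neg, map_nsmul, mul_comm, ← Nat.cast_succ, ← nsmul_eq_mul] at hcoeff
  apply nsmul_right_injective m.succ_ne_zero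
  simp only [hsplit, map_add, coeff_succ_X_mul, smul_add, hcoeff, neg_add_cancel, smul_zero]

theorem hasSubst_X_mul (P : A⟦X⟧) : HasSubst (X * P) :=
  HasSubst.of_constantCoeff_zero' (by simp)

theorem isUnit_coeff_one_X_mul {P Q : A⟦X⟧} (hPQ : P * Q = 1) :
    IsUnit (coeff 1 (X * P)) := by
  rw [coeff_succ_X_mul, coeff_zero_eq_constantCoeff]
  exact IsUnit.of_mul_eq_one (constantCoeff Q) (by rw [← map_mul, hPQ, map_one])

section Lagrange

variable (P Q : A⟦X⟧)

/-- For `Q = P⁻¹`, these are the coefficients of `F` composed with the compositional inverse of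
`X * P`: this is Lagrange inversion, `lagrange_eq_subst_substInv`. -/
noncomputable def lagrange (F : A⟦X⟧) : A⟦X⟧ :=
  mk fun n => coeff n (F * (d⁄dX A (X * P) * Q ^ (n + 1)))

variable {P Q}

theorem lagrange_add (F G : A⟦X⟧) :
    lagrange P Q (F + G) = lagrange P Q F + lagrange P Q G := by
  ext n
  simp [lagrange, add_mul]

theorem lagrange_C (hPQ : P * Q = 1)
    (hres : ∀ m, coeff (m + 1) (d⁄dX A (X * P) * Q ^ (m + 2)) = 0) (c : A) :
    lagrange P Q (C c) = C c := by
  ext n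
  rw [lagrange, coeff_mk, coeff_C_mul]
  cases n with
  | zero =>
    have h1 : constantCoeff (d⁄dX A (X * P) * Q) = 1 := by
      rw [derivative_X_mul, add_mul, map_add, hPQ]
      simp
    rw [zero_add, pow_one, coeff_zero_eq_constantCoeff, h1, mul_one, constantCoeff_C]
  | succ m => rw [hres, mul_zero, coeff_C, if_neg m.succ_ne_zero]

theorem lagrange_X_mul_mul (hPQ : P * Q = 1) (F : A⟦X⟧) :
    lagrange P Q (X * P * F) = X * lagrange P Q F := by
  ext n
  cases n with
  | zero => simp [lagrange]
  | succ m =>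
    have h : X * P * F * (d⁄dX A (X * P) * Q ^ (m + 1 + 1))
        = X * (F * (d⁄dX A (X * P) * Q ^ (m + 1))) * (P * Q) := by ring
    simp only [lagrange, coeff_mk, coeff_succ_X_mul]
    rw [h, hPQ, mul_one, coeff_succ_X_mul]

theorem X_pow_dvd_subst_lagrange_sub (hPQ : P * Q = 1)
    (hres : ∀ m, coeff (m + 1) (d⁄dX A (X * P) * Q ^ (m + 2)) = 0) (k : ℕ) (F : A⟦X⟧) :
    X ^ k ∣ subst (X * P) (lagrange P Q F) - F := by
  induction k generalizing F with
  | zero => simp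
  | succ k ih =>
    -- `F = F(0) + (X P) G` turns the difference for `F` into `X P` times the difference for `G`.
    have hF : F = C (constantCoeff F) + X * P * ((mk fun p => coeff (p + 1) F) * Q) := by
      linear_combination (sub_const_eq_X_mul_shift F) - X * (mk fun p => coeff (p + 1) F) * hPQ
    obtain ⟨E, hE⟩ := ih ((mk fun p => coeff (p + 1) F) * Q)
    have hg := hasSubst_X_mul P
    rw [hF, lagrange_add, lagrange_C hPQ hres, lagrange_X_mul_mul hPQ, subst_add hg,
      subst_mul hg, subst_X hg]
    have hC : subst (X * P) (C (constantCoeff F)) = C (constantCoeff F) := subst_C _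
    exact ⟨P * E, by rw [hC]; linear_combination X * P * hE⟩

theorem subst_lagrange (hPQ : P * Q = 1)
    (hres : ∀ m, coeff (m + 1) (d⁄dX A (X * P) * Q ^ (m + 2)) = 0) (F : A⟦X⟧) :
    subst (X * P) (lagrange P Q F) = F := by
  ext n
  rw [← sub_eq_zero, ← map_sub]
  exact X_pow_dvd_iff.mp (X_pow_dvd_subst_lagrange_sub hPQ hres (n + 1) F) n n.lt_succ_self

theorem lagrange_eq_subst_substInv (hPQ : P * Q = 1)
    (hres : ∀ m, coeff (m + 1) (d⁄dX A (X * P) * Q ^ (m + 2)) = 0) (F : A⟦X⟧) :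
    lagrange P Q F = subst ((X * P).substInvOfIsUnit (isUnit_coeff_one_X_mul hPQ)) F := by
  set h := (X * P).substInvOfIsUnit (isUnit_coeff_one_X_mul hPQ)
  have hX : subst h (X * P) = X := subst_substInvOfIsUnit_right _ (by simp) _
  calc lagrange P Q F = subst (subst h (X * P)) (lagrange P Q F) := by rw [hX, X_subst]
    _ = subst h (subst (X * P) (lagrange P Q F)) :=
      (subst_comp_subst_apply (hasSubst_X_mul P) (HasSubst.substInvOfIsUnit _ _) _).symm
    _ = subst h F := by rw [subst_lagrange hPQ hres]

end Lagrange

noncomputable def geom (a : A) : A⟦X⟧ := rescale a (mk 1)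

theorem geom_mul_one_sub (a : A) : geom a * (1 - C a * X) = 1 := by
  rw [geom, ← rescale_X, ← map_one (rescale a), ← map_sub, ← map_mul,
    mk_one_mul_one_sub_eq_one]

theorem coeff_mk_one_pow (N k : ℕ) : coeff k ((mk 1 : A⟦X⟧) ^ N) = Scoef N k := by
  cases N with
  | zero => cases k <;> simp [Scoef, coeff_one]
  | succ d => simp [mk_one_pow_eq_mk_choose_add, Scoef, Nat.choose_symm_add, add_comm k]

theorem coeff_geom_pow (a : A) (N k : ℕ) : coeff k (geom a ^ N) = Scoef N k * a ^ k := by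
  rw [geom, ← map_pow, coeff_rescale, coeff_mk_one_pow, mul_comm]

theorem map_geom {B : Type*} [CommRing B] (φ : A →+* B) (a : A) :
    map φ (geom a) = geom (φ a) := by
  ext k
  simp [geom, coeff_rescale]

end PowerSeries

open PowerSeries

section Specialization

variable {A : Type*} [CommRing A]

theorem Spoly_eq_coeff (x y z : A) (n Nx Ny Nz : ℕ) :
    Spoly x y z n Nx Ny Nz = coeff n (geom x ^ Nx * (geom y ^ Ny * geom z ^ Nz)) := by
  rw [Spoly, coeff_mul_eq_sum_range]
  refine Finset.sum_congr rfl fun a ha => ?_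
  rw [coeff_mul_eq_sum_range, Finset.mul_sum, Nat.sub_add_comm (Finset.mem_range_succ_iff.mp ha)]
  refine Finset.sum_congr rfl fun b _ => ?_
  rw [coeff_geom_pow, coeff_geom_pow, coeff_geom_pow, Nat.sub_sub]
  ring

theorem Spoly_swap12 (x y z : A) (n Nx Ny Nz : ℕ) :
    Spoly x y z n Nx Ny Nz = Spoly y x z n Ny Nx Nz := by
  rw [Spoly_eq_coeff, Spoly_eq_coeff, mul_left_comm]

theorem Spoly_swap13 (x y z : A) (n Nx Ny Nz : ℕ) :
    Spoly x y z n Nx Ny Nz = Spoly z y x n Nz Ny Nx := by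
  rw [Spoly_eq_coeff, Spoly_eq_coeff]
  congr 1
  ring

theorem Rpoly_swap12 (x y z : A) (n Nx Ny Nz : ℕ) :
    Rpoly x y z n Nx Ny Nz = Rpoly y x z n Ny Nx Nz := by
  simp only [Rpoly, Spoly_swap12 x y z]
  ring

theorem Rpoly_swap13 (x y z : A) (n Nx Ny Nz : ℕ) :
    Rpoly x y z n Nx Ny Nz = Rpoly z y x n Nz Ny Nx := by
  simp only [Rpoly, Spoly_swap13 x y z]
  ring

noncomputable def prodOneSub (x y z : A) : A⟦X⟧ :=
  (1 - C x * X) * ((1 - C y * X) * (1 - C z * X))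

noncomputable def prodGeom (x y z : A) : A⟦X⟧ := geom x * (geom y * geom z)

theorem prodOneSub_mul_prodGeom (x y z : A) : prodOneSub x y z * prodGeom x y z = 1 := by
  calc prodOneSub x y z * prodGeom x y z
      = (geom x * (1 - C x * X)) * ((geom y * (1 - C y * X)) * (geom z * (1 - C z * X))) := by
        rw [prodOneSub, prodGeom]; ring
    _ = 1 := by rw [geom_mul_one_sub, geom_mul_one_sub, geom_mul_one_sub, one_mul, one_mul]

theorem four_sub_geom (x y z : A) :
    (4 : A⟦X⟧) - geom x - geom y - geom z
      = d⁄dX A (X * prodOneSub x y z) * prodGeom x y z := by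
  have hP : ((4 : A⟦X⟧) - geom x - geom y - geom z) * prodOneSub x y z
      = d⁄dX A (X * prodOneSub x y z) := by
    rw [derivative_X_mul, prodOneSub]
    simp only [Derivation.leibniz, map_sub, Derivation.map_one_eq_zero, derivative_C,
      derivative_X, smul_eq_mul]
    linear_combination -((1 - C y * X) * (1 - C z * X)) * geom_mul_one_sub x
      - ((1 - C x * X) * (1 - C z * X)) * geom_mul_one_sub y
      - ((1 - C x * X) * (1 - C y * X)) * geom_mul_one_sub z
  rw [← hP, mul_assoc, prodOneSub_mul_prodGeom, mul_one]

theorem Rpoly_eq_coeff (x y z : A) (n Nx Ny Nz : ℕ) :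
    Rpoly x y z n Nx Ny Nz = coeff n (geom x ^ Nx * (geom y ^ Ny * geom z ^ Nz)
      * (d⁄dX A (X * prodOneSub x y z) * prodGeom x y z ^ (n + 1))) := by
  have h : geom x ^ Nx * (geom y ^ Ny * geom z ^ Nz)
      * (d⁄dX A (X * prodOneSub x y z) * prodGeom x y z ^ (n + 1))
      = 4 * (geom x ^ (Nx + n) * (geom y ^ (Ny + n) * geom z ^ (Nz + n)))
        - geom x ^ (Nx + n + 1) * (geom y ^ (Ny + n) * geom z ^ (Nz + n))
        - geom x ^ (Nx + n) * (geom y ^ (Ny + n + 1) * geom z ^ (Nz + n))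
        - geom x ^ (Nx + n) * (geom y ^ (Ny + n) * geom z ^ (Nz + n + 1)) := by
    calc _ = geom x ^ Nx * (geom y ^ Ny * geom z ^ Nz) * prodGeom x y z ^ n
          * (d⁄dX A (X * prodOneSub x y z) * prodGeom x y z) := by ring
      _ = _ := by rw [← four_sub_geom, prodGeom]; ring
  rw [h, Rpoly, Spoly_eq_coeff, Spoly_eq_coeff, Spoly_eq_coeff, Spoly_eq_coeff, map_sub, map_sub,
    map_sub, ← map_ofNat C 4, coeff_C_mul]

theorem map_prodOneSub {B : Type*} [CommRing B] (φ : A →+* B) (x y z : A) :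
    map φ (prodOneSub x y z) = prodOneSub (φ x) (φ y) (φ z) := by
  simp [prodOneSub]

theorem map_prodGeom {B : Type*} [CommRing B] (φ : A →+* B) (x y z : A) :
    map φ (prodGeom x y z) = prodGeom (φ x) (φ y) (φ z) := by
  simp [prodGeom, map_geom]

theorem coeff_succ_derivative_X_mul_prodOneSub_mul_pow (x y z : A) (m : ℕ) :
    coeff (m + 1) (d⁄dX A (X * prodOneSub x y z) * prodGeom x y z ^ (m + 2)) = 0 := by
  let φ : MvPolynomial (Fin 3) ℤ →+* A :=
    MvPolynomial.eval₂Hom (Int.castRingHom A) ![x, y, z]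
  have h := congrArg φ (coeff_succ_derivative_X_mul_mul_pow
    (prodOneSub_mul_prodGeom (.X 0) (.X 1) (.X 2)) m)
  rw [← coeff_map, map_mul (map φ), map_pow (map φ), map_derivative, map_mul (map φ), map_X,
    map_prodOneSub, map_prodGeom, map_zero] at h
  simpa [φ] using h

theorem mk_Rpoly_mul_one_sub (x y z : A) :
    (mk fun n => Rpoly x y z n 1 0 0) * (1 - X * (mk fun n => Rpoly x y z n 1 1 1) * C x) = 1 := by
  have hPQ := prodOneSub_mul_prodGeom x y z
  have hres := coeff_succ_derivative_X_mul_prodOneSub_mul_pow x y z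
  let φ : A⟦X⟧ →ₐ[A] A⟦X⟧ :=
    substAlgHom (HasSubst.substInvOfIsUnit _ (isUnit_coeff_one_X_mul hPQ))
  have hL (F : A⟦X⟧) : lagrange (prodOneSub x y z) (prodGeom x y z) F = φ F := by
    rw [lagrange_eq_subst_substInv hPQ hres, coe_substAlgHom]
  have hC : (mk fun n => Rpoly x y z n 1 0 0) = φ (geom x) := by
    rw [← hL]
    ext n
    simp [lagrange, Rpoly_eq_coeff]
  have hD : (mk fun n => Rpoly x y z n 1 1 1) = φ (prodGeom x y z) := by
    rw [← hL]
    ext n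
    simp [lagrange, Rpoly_eq_coeff, prodGeom]
  have hX : φ (X * prodOneSub x y z) = X := by
    rw [coe_substAlgHom]
    exact subst_substInvOfIsUnit_right _ (by simp) _
  have hCx : φ (C x) = C x := φ.commutes x
  calc _ = φ (geom x * (1 - X * prodOneSub x y z * prodGeom x y z * C x)) := by
        rw [hC, hD, map_mul, map_sub, map_one, map_mul, map_mul, hX, hCx]
    _ = 1 := by rw [mul_assoc X, hPQ, mul_one, mul_comm X, geom_mul_one_sub, map_one]

end Specialization

theorem fY_eq_fX {R : Type*} [CommRing R] (JX JY JZ : R) : fY JX JY JZ = fX JY JX JZ := by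
  ext k
  simp only [fX, fY, coeff_mk]
  rw [Rpoly_swap12]

theorem fZ_eq_fX {R : Type*} [CommRing R] (JX JY JZ : R) : fZ JX JY JZ = fX JZ JY JX := by
  ext k
  simp only [fX, fZ, coeff_mk]
  rw [Rpoly_swap13]

theorem omegaPS_swap12 {R : Type*} [CommRing R] (JX JY JZ : R) :
    omegaPS JX JY JZ = omegaPS JY JX JZ := by
  ext k
  simp only [omegaPS, coeff_mk]
  rw [Rpoly_swap12]

theorem omegaPS_swap13 {R : Type*} [CommRing R] (JX JY JZ : R) :
    omegaPS JX JY JZ = omegaPS JZ JY JX := by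
  ext k
  simp only [omegaPS, coeff_mk]
  rw [Rpoly_swap13]

theorem fX_eq_expand {R : Type*} [CommRing R] (JX JY JZ : R) :
    fX JX JY JZ
      = expand 2 two_ne_zero (mk fun n => Rpoly (JX ^ 2) (JY ^ 2) (JZ ^ 2) n 1 0 0) := by
  ext k
  simp [fX, coeff_expand, Nat.dvd_iff_mod_eq_zero]

theorem omegaPS_eq_expand {R : Type*} [CommRing R] (JX JY JZ : R) :
    omegaPS JX JY JZ
      = expand 2 two_ne_zero (X * mk fun n => Rpoly (JX ^ 2) (JY ^ 2) (JZ ^ 2) n 1 1 1) := by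
  ext k
  rw [omegaPS, coeff_mk, coeff_expand]
  obtain ⟨j, rfl | rfl⟩ := Nat.even_or_odd' k
  · cases j with
    | zero => simp
    | succ i => simp [Nat.mul_add, coeff_succ_X_mul]
  · simp

theorem fX_mul_one_sub_omegaPS {R : Type*} [CommRing R] (JX JY JZ : R) :
    fX JX JY JZ * (1 - omegaPS JX JY JZ * C (JX ^ 2)) = 1 := by
  rw [fX_eq_expand, omegaPS_eq_expand, ← expand_C 2 two_ne_zero, ← map_mul,
    ← map_one (expand 2 two_ne_zero), ← map_sub, ← map_mul, mk_Rpoly_mul_one_sub, map_one]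

/-- `f_α(s) (1 - ω(s) J_α^2) = 1` for each `α ∈ {X, Y, Z}`. -/
theorem stmt15 {R : Type*} [CommRing R] (JX JY JZ : R) :
    fX JX JY JZ * (1 - omegaPS JX JY JZ * PowerSeries.C (JX ^ 2)) = 1 ∧
    fY JX JY JZ * (1 - omegaPS JX JY JZ * PowerSeries.C (JY ^ 2)) = 1 ∧
    fZ JX JY JZ * (1 - omegaPS JX JY JZ * PowerSeries.C (JZ ^ 2)) = 1 := by
  refine ⟨fX_mul_one_sub_omegaPS JX JY JZ, ?_, ?_⟩
  · rw [fY_eq_fX, omegaPS_swap12]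
    exact fX_mul_one_sub_omegaPS JY JX JZ
  · rw [fZ_eq_fX, omegaPS_swap13]
    exact fX_mul_one_sub_omegaPS JZ JY JX
end

section
/- Let \Gamma_2^i be the 4\times4 block matrix over the ring of operators on (\mathbb{C}^2)^{\otimes L} tensored with dual numbers (\epsilon^2 = 0), with entries (\Gamma_2^i)_{1,1} = I, first row (I, J_X X_i, J_Y Y_i, J_Z Z_i), first column below the diagonal (\epsilon X_i, \epsilon Y_i, \epsilon Z_i)^T, and all other entries zero. Then for L \ge 2, Tr_a[\Gamma_2^1 \Gamma_2^2 \cdots \Gamma_2^L] = I + \epsilon H, where H = \sum_{i=1}^{L} (J_X X_i X_{i+1} + J_Y Y_i Y_{i+1} + J_Z Z_i Z_{i+1}) is the periodic XYZ Hamiltonian. -/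
/-!
Write `Γ₂^i = e₀ rᵢᵀ + ε cᵢ e₀ᵀ` with `rᵢ = (1, J_X X_i, J_Y Y_i, J_Z Z_i)` and
`cᵢ = (0, X_i, Y_i, Z_i)`. As `rᵢ` starts with `1`, products of the rank-one matrices `e₀ rᵢᵀ`
collapse to their last factor, so the `ε⁰` part of the trace is `1`. Since `ε² = 0`, the `ε¹` part
is a sum over the one site `k` that carries its column `c_k`: for `k > 1` it contributes the bond
`r_{k-1} ⬝ c_k`, and for `k = 1` it contributes `c_1 ⬝ r_L`, which is the wrap-around bond once the
Pauli operators on the distinct sites `1` and `L` are commuted.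
-/

noncomputable section

open DualNumber TrivSqZeroExt

/-- Operators on the spin chain `(ℂ²)^{⊗L}`, modelled as matrices indexed by
spin configurations `Fin L → Fin 2`. -/
abbrev Op (L : ℕ) := Matrix (Fin L → Fin 2) (Fin L → Fin 2) ℂ

/-- The operator acting as the one-site matrix `A` on site `i` and as the identity
on all other sites. -/
def siteOp (L : ℕ) (A : Matrix (Fin 2) (Fin 2) ℂ) (i : Fin L) : Op L :=
  fun f g => (if ∀ j, j ≠ i → f j = g j then 1 else 0) * A (f i) (g i)

/-- Pauli matrix `X`. -/
def PX : Matrix (Fin 2) (Fin 2) ℂ := !![0, 1; 1, 0]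
/-- Pauli matrix `Y`. -/
def PY : Matrix (Fin 2) (Fin 2) ℂ := !![0, -Complex.I; Complex.I, 0]
/-- Pauli matrix `Z`. -/
def PZ : Matrix (Fin 2) (Fin 2) ℂ := !![1, 0; 0, -1]

/-- The periodic XYZ Hamiltonian. -/
def Ham (L : ℕ) [NeZero L] (JX JY JZ : ℂ) : Op L :=
  ∑ i : Fin L,
    (JX • (siteOp L PX i * siteOp L PX (i + 1)) +
     JY • (siteOp L PY i * siteOp L PY (i + 1)) +
     JZ • (siteOp L PZ i * siteOp L PZ (i + 1)))

/-- The `4 × 4` local tensor `Γ₂^i` of the MPO for the Hamiltonian, with entries in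
the dual numbers (`ε² = 0`) over the operator ring. -/
def Gamma2 (L : ℕ) [NeZero L] (JX JY JZ : ℂ) (i : Fin L) :
    Matrix (Fin 4) (Fin 4) (DualNumber (Op L)) :=
  Matrix.of
    ![![inl 1, inl (JX • siteOp L PX i), inl (JY • siteOp L PY i), inl (JZ • siteOp L PZ i)],
      ![ε * inl (siteOp L PX i), 0, 0, 0],
      ![ε * inl (siteOp L PY i), 0, 0, 0],
      ![ε * inl (siteOp L PZ i), 0, 0, 0]]

open Matrix

section DualMatrix

variable {n R : Type*} [Fintype n] [Ring R]

/- `Matrix.dualNumberEquiv` needs a commutative base ring, and here the entries are operators. -/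
def dualMatrix (A B : Matrix n n R) : Matrix n n (DualNumber R) :=
  of fun i j => inl (A i j) + ε * inl (B i j)

omit [Fintype n] in
@[simp] lemma fst_dualMatrix_apply (A B : Matrix n n R) (i j : n) :
    (dualMatrix A B i j).fst = A i j := by
  simp [dualMatrix]

omit [Fintype n] in
@[simp] lemma snd_dualMatrix_apply (A B : Matrix n n R) (i j : n) :
    (dualMatrix A B i j).snd = B i j := by
  simp [dualMatrix]

lemma dualMatrix_mul_dualMatrix (A B C D : Matrix n n R) :
    dualMatrix A B * dualMatrix C D = dualMatrix (A * C) (A * D + B * C) := by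
  ext i j
  · simp [mul_apply, fst_sum]
  · simp [mul_apply, snd_sum, Finset.sum_add_distrib]

lemma trace_dualMatrix (A B : Matrix n n R) :
    trace (dualMatrix A B) = inl (trace A) + ε * inl (trace B) := by
  ext <;> simp [trace, fst_sum, snd_sum]

end DualMatrix

section MPO

variable {n R : Type*} [Fintype n] [DecidableEq n] [Ring R] (o : n)

def mpoTensor (r c : n → R) : Matrix n n (DualNumber R) :=
  dualMatrix (vecMulVec (Pi.single o 1) r) (vecMulVec c (Pi.single o 1))

/-- Since `r i o = 1`, a product of the rank-one matrices `e_o (r i)ᵀ` collapses to its last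
factor. -/
lemma prod_ofFn_mpoTensor (m : ℕ) (r c : Fin (m + 2) → n → R) (hr : ∀ i, r i o = 1) :
    ∃ v : n → R, v o = ∑ i : Fin (m + 1), r i.castSucc ⬝ᵥ c i.succ ∧
      (List.ofFn fun i => mpoTensor o (r i) (c i)).prod =
        dualMatrix (vecMulVec (Pi.single o 1) (r (Fin.last _)))
          (vecMulVec (Pi.single o 1) v + vecMulVec (c 0) (r (Fin.last _))) := by
  induction m with
  | zero =>
    refine ⟨(r 0 ⬝ᵥ c 1) • Pi.single o 1, by simp, ?_⟩
    simp [mpoTensor, dualMatrix_mul_dualMatrix, vecMulVec_mul_vecMulVec, hr]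
  | succ m ih =>
    obtain ⟨v, hv, hprod⟩ := ih (fun i => r i.succ) (fun i => c i.succ) (fun i => hr _)
    refine ⟨v + (r 0 ⬝ᵥ c 1) • r (Fin.last _), ?_, ?_⟩
    · simp [hv, hr, Fin.sum_univ_succ, add_comm]
    · rw [List.ofFn_succ, List.prod_cons, hprod]
      simp [mpoTensor, dualMatrix_mul_dualMatrix, vecMulVec_mul_vecMulVec, hr, mul_add,
        vecMulVec_add, add_assoc]

theorem trace_prod_ofFn_mpoTensor (m : ℕ) (r c : Fin (m + 2) → n → R) (hr : ∀ i, r i o = 1) :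
    trace (List.ofFn fun i => mpoTensor o (r i) (c i)).prod =
      inl 1 + ε * inl (∑ i : Fin (m + 1), r i.castSucc ⬝ᵥ c i.succ + c 0 ⬝ᵥ r (Fin.last _)) := by
  obtain ⟨v, hv, hprod⟩ := prod_ofFn_mpoTensor o m r c hr
  rw [hprod, trace_dualMatrix, trace_add]
  simp [hr, hv]

end MPO

section SpinChain

variable {L : ℕ}

lemma siteOp_mul_siteOp_apply (A B : Matrix (Fin 2) (Fin 2) ℂ) {i j : Fin L} (hij : i ≠ j)
    (f g : Fin L → Fin 2) :
    (siteOp L A i * siteOp L B j) f g =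
      if ∀ k, k ≠ i → k ≠ j → f k = g k then A (f i) (g i) * B (f j) (g j) else 0 := by
  rw [mul_apply, Finset.sum_eq_single (Function.update f i (g i))]
  · simp only [siteOp, Function.update_self, Function.update_of_ne hij.symm]
    split_ifs <;> grind
  · intro h _ hne
    simp only [siteOp]
    split_ifs <;> grind
  · simp

lemma siteOp_mul_comm (A B : Matrix (Fin 2) (Fin 2) ℂ) {i j : Fin L} (hij : i ≠ j) :
    siteOp L A i * siteOp L B j = siteOp L B j * siteOp L A i := by
  ext f g
  rw [siteOp_mul_siteOp_apply A B hij, siteOp_mul_siteOp_apply B A hij.symm]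
  grind

def xyzRow (JX JY JZ : ℂ) (i : Fin L) : Fin 4 → Op L :=
  ![1, JX • siteOp L PX i, JY • siteOp L PY i, JZ • siteOp L PZ i]

def pauliCol (i : Fin L) : Fin 4 → Op L :=
  ![0, siteOp L PX i, siteOp L PY i, siteOp L PZ i]

lemma Gamma2_eq_mpoTensor [NeZero L] (JX JY JZ : ℂ) (i : Fin L) :
    Gamma2 L JX JY JZ i = mpoTensor 0 (xyzRow JX JY JZ i) (pauliCol i) := by
  refine Matrix.ext fun a b => ?_
  fin_cases a <;> fin_cases b <;> simp [Gamma2, mpoTensor, dualMatrix, xyzRow, pauliCol]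

lemma xyzRow_dotProduct_pauliCol (JX JY JZ : ℂ) (i j : Fin L) :
    xyzRow JX JY JZ i ⬝ᵥ pauliCol j =
      JX • (siteOp L PX i * siteOp L PX j) + JY • (siteOp L PY i * siteOp L PY j) +
        JZ • (siteOp L PZ i * siteOp L PZ j) := by
  simp [xyzRow, pauliCol, dotProduct, Fin.sum_univ_four, add_assoc]

lemma pauliCol_dotProduct_xyzRow (JX JY JZ : ℂ) {i j : Fin L} (hij : i ≠ j) :
    pauliCol j ⬝ᵥ xyzRow JX JY JZ i =
      JX • (siteOp L PX i * siteOp L PX j) + JY • (siteOp L PY i * siteOp L PY j) +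
        JZ • (siteOp L PZ i * siteOp L PZ j) := by
  simp [xyzRow, pauliCol, dotProduct, Fin.sum_univ_four, add_assoc, siteOp_mul_comm _ _ hij]

end SpinChain

/-- `Tr_a [Γ₂^1 Γ₂^2 ⋯ Γ₂^L] = I + ε H` for the periodic XYZ chain with `L ≥ 2`. -/
theorem stmt19 (L : ℕ) [NeZero L] (hL : 2 ≤ L) (JX JY JZ : ℂ) :
    Matrix.trace (List.ofFn fun i : Fin L => Gamma2 L JX JY JZ i).prod =
      inl 1 + ε * inl (Ham L JX JY JZ) := by
  obtain ⟨m, rfl⟩ : ∃ m, L = m + 2 := ⟨L - 2, by omega⟩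
  simp only [Gamma2_eq_mpoTensor]
  rw [trace_prod_ofFn_mpoTensor 0 m _ _ fun _ => rfl]
  congr 3
  rw [Ham, Fin.sum_univ_castSucc (n := m + 1)]
  congr 1
  · refine Finset.sum_congr rfl fun i _ => ?_
    rw [xyzRow_dotProduct_pauliCol, Fin.coeSucc_eq_succ]
  · rw [pauliCol_dotProduct_xyzRow _ _ _ (Fin.last_pos.ne' : Fin.last (m + 1) ≠ 0),
      Fin.last_add_one]

end
end
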